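/- Let h ≥ 2, let A be a finite set, let q be a probability mass function on A, let R be a finite set with probability mass function p, and let strategies p_{A_i} : R → (A → [0,1]) with ∑_{a} p_{A_i}(r)(a) = 1 generate the distribution 𝟙[a₁ = ⋯ = a_h]·q(a₁), i.e. ∑_{r} p(r)·∏_i p_{A_i}(r)(aᵢ) = 𝟙[a₁ = ⋯ = a_h]·q(a₁). For a ∈ A define Q_a = {r ∈ R : p(r) > 0 and p_{A_1}(r)(a) = 1}. Then for every a ∈ A, q(a) = ∑_{r ∈ Q_a} p(r). -/
import Mathlib


/-- in the no-input multipartite Bell scenario generating the perfectly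
correlated distribution `𝟙[a₁ = ⋯ = a_h]·q(a₁)`, with
`Q_a = {r : p(r) > 0 ∧ p_{A₁}(r)(a) = 1}`, one has `q(a) = ∑_{r ∈ Q_a} p(r)` for all `a`. -/
theorem stmt_6 {A R : Type*} [Fintype A] [Fintype R] [DecidableEq A]
    (h : ℕ) (hh : 2 ≤ h)
    (p : R → ℝ) (hp0 : ∀ r, 0 ≤ p r) (hp1 : ∑ r, p r = 1)
    (q : A → ℝ) (hq0 : ∀ a, 0 ≤ q a) (hq1 : ∑ a, q a = 1)
    (pA : Fin h → R → A → ℝ)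
    (hpA0 : ∀ i r a, 0 ≤ pA i r a) (hpA1 : ∀ i r a, pA i r a ≤ 1)
    (hpAsum : ∀ i r, ∑ a, pA i r a = 1)
    (hgen : ∀ a : Fin h → A,
      ∑ r, p r * ∏ i, pA i r (a i) =
        if ∀ i, a i = a ⟨0, by omega⟩ then q (a ⟨0, by omega⟩) else 0) :
    ∀ a : A,
      q a = ∑ r ∈ Finset.univ.filter
          (fun r : R => 0 < p r ∧ pA ⟨0, by omega⟩ r a = 1), p r := by
  classical
  set i0 : Fin h := ⟨0, by omega⟩ with hi0
  set i1 : Fin h := ⟨1, by omega⟩ with hi1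
  have hi01 : i0 ≠ i1 := by
    simp [hi0, hi1, Fin.ext_iff]
  -- Marginalization lemma: for any nonempty set S of parties,
  -- ∑ r, p r * ∏_{i∈S} pA i r a = q a.
  have marg : ∀ S : Finset (Fin h), S.Nonempty → ∀ a : A,
      ∑ r, p r * ∏ i ∈ S, pA i r a = q a := by
    intro S hS a
    have key : ∑ g : Fin h → A,
        (∏ i ∈ S, (if g i = a then (1:ℝ) else 0)) *
          (∑ r, p r * ∏ i, pA i r (g i)) = q a := by
      -- use hgen to evaluate each inner sum
      have : ∀ g : Fin h → A,
          (∏ i ∈ S, (if g i = a then (1:ℝ) else 0)) *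
            (∑ r, p r * ∏ i, pA i r (g i)) =
          (∏ i ∈ S, (if g i = a then (1:ℝ) else 0)) *
            (if ∀ i, g i = g i0 then q (g i0) else 0) := by
        intro g; rw [hgen g]
      rw [Finset.sum_congr rfl (fun g _ => this g)]
      rw [Finset.sum_eq_single (fun _ => a)]
      · simp
      · intro g _ hg
        by_cases hc : ∀ i, g i = g i0
        · -- g is constant; its value must differ from a
          have hgc : g = fun _ => g i0 := funext hc
          have hne : g i0 ≠ a := by
            intro hgi
            apply hg; rw [hgc, hgi]
          obtain ⟨j, hj⟩ := hS
          have : (∏ i ∈ S, (if g i = a then (1:ℝ) else 0)) = 0 := by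
            apply Finset.prod_eq_zero hj
            simp [hc j, hne]
          rw [this, zero_mul]
        · simp [hc]
      · simp
    -- now evaluate key the other way
    rw [← key]
    have swap : ∑ g : Fin h → A,
        (∏ i ∈ S, (if g i = a then (1:ℝ) else 0)) *
          (∑ r, p r * ∏ i, pA i r (g i)) =
        ∑ r, p r * ∑ g : Fin h → A,
          (∏ i ∈ S, (if g i = a then (1:ℝ) else 0)) * ∏ i, pA i r (g i) := by
      simp only [Finset.mul_sum]
      rw [Finset.sum_comm]
      refine Finset.sum_congr rfl fun r _ => Finset.sum_congr rfl fun g _ => by ring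
    rw [swap]
    congr 1; ext r
    congr 1
    -- ∑_g ind(g) * ∏_i pA i r (g i) = ∏_{i∈S} pA i r a
    have prodform : ∀ g : Fin h → A,
        (∏ i ∈ S, (if g i = a then (1:ℝ) else 0)) * ∏ i, pA i r (g i) =
        ∏ i, ((if i ∈ S then (if g i = a then (1:ℝ) else 0) else 1) * pA i r (g i)) := by
      intro g
      rw [Finset.prod_mul_distrib]
      congr 1
      rw [← Finset.prod_filter]
      congr 1
      simp [Finset.filter_mem_eq_inter]
    rw [Finset.sum_congr rfl (fun g _ => prodform g)]
    have expand : ∑ g ∈ Fintype.piFinset (fun _ : Fin h => (Finset.univ : Finset A)),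
        ∏ i, ((if i ∈ S then (if g i = a then (1:ℝ) else 0) else 1) * pA i r (g i)) =
        ∏ i, ∑ x : A, ((if i ∈ S then (if x = a then (1:ℝ) else 0) else 1) * pA i r x) :=
      (Finset.prod_univ_sum (fun _ => (Finset.univ : Finset A))
        (fun i x => (if i ∈ S then (if x = a then (1:ℝ) else 0) else 1) * pA i r x)).symm
    rw [Fintype.piFinset_univ] at expand
    rw [expand]
    have : ∀ i : Fin h, (∑ x : A, (if i ∈ S then (if x = a then (1:ℝ) else 0) else 1) * pA i r x)
        = if i ∈ S then pA i r a else 1 := by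
      intro i
      by_cases hiS : i ∈ S
      · simp [hiS, Finset.sum_ite_eq']
      · simp [hiS, hpAsum i r]
    rw [Finset.prod_congr rfl (fun i _ => this i)]
    rw [← Finset.prod_filter]
    congr 1
    simp [Finset.filter_mem_eq_inter]
  intro a
  have M0 : ∑ r, p r * pA i0 r a = q a := by
    have := marg {i0} ⟨i0, Finset.mem_singleton_self i0⟩ a
    simpa using this
  have M1 : ∑ r, p r * pA i1 r a = q a := by
    have := marg {i1} ⟨i1, Finset.mem_singleton_self i1⟩ a
    simpa using this
  have J : ∑ r, p r * (pA i0 r a * pA i1 r a) = q a := by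
    have := marg {i0, i1} ⟨i0, by simp⟩ a
    simp only [Finset.prod_pair hi01] at this
    exact this
  -- determinism on the support
  have Z0 : ∀ r, 0 < p r → pA i0 r a * (1 - pA i1 r a) = 0 := by
    have hsum : ∑ r, p r * (pA i0 r a * (1 - pA i1 r a)) = 0 := by
      have : ∑ r, p r * (pA i0 r a * (1 - pA i1 r a)) =
          (∑ r, p r * pA i0 r a) - ∑ r, p r * (pA i0 r a * pA i1 r a) := by
        rw [← Finset.sum_sub_distrib]
        congr 1; ext r; ring
      rw [this, M0, J, sub_self]
    intro r hr
    have hnn : ∀ s ∈ Finset.univ, 0 ≤ p s * (pA i0 s a * (1 - pA i1 s a)) := by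
      intro s _
      apply mul_nonneg (hp0 s)
      apply mul_nonneg (hpA0 _ _ _)
      linarith [hpA1 i1 s a]
    have := (Finset.sum_eq_zero_iff_of_nonneg hnn).mp hsum r (Finset.mem_univ r)
    have := mul_eq_zero.mp this
    rcases this with h1 | h2
    · exact absurd h1 (ne_of_gt hr)
    · exact h2
  have Z1 : ∀ r, 0 < p r → pA i1 r a * (1 - pA i0 r a) = 0 := by
    have hsum : ∑ r, p r * (pA i1 r a * (1 - pA i0 r a)) = 0 := by
      have : ∑ r, p r * (pA i1 r a * (1 - pA i0 r a)) =
          (∑ r, p r * pA i1 r a) - ∑ r, p r * (pA i0 r a * pA i1 r a) := by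
        rw [← Finset.sum_sub_distrib]
        congr 1; ext r; ring
      rw [this, M1, J, sub_self]
    intro r hr
    have hnn : ∀ s ∈ Finset.univ, 0 ≤ p s * (pA i1 s a * (1 - pA i0 s a)) := by
      intro s _
      apply mul_nonneg (hp0 s)
      apply mul_nonneg (hpA0 _ _ _)
      linarith [hpA1 i0 s a]
    have := (Finset.sum_eq_zero_iff_of_nonneg hnn).mp hsum r (Finset.mem_univ r)
    have := mul_eq_zero.mp this
    rcases this with h1 | h2
    · exact absurd h1 (ne_of_gt hr)
    · exact h2
  have det : ∀ r, 0 < p r → pA i0 r a ≠ 1 → pA i0 r a = 0 := by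
    intro r hr hne
    by_contra h0
    -- pA i0 r a ≠ 0, so from Z0, pA i1 r a = 1; from Z1, pA i0 r a = 1
    have h1 : pA i1 r a = 1 := by
      rcases mul_eq_zero.mp (Z0 r hr) with hc | hc
      · exact absurd hc h0
      · linarith
    have : pA i0 r a = 1 := by
      have := Z1 r hr
      rw [h1, one_mul] at this
      linarith
    exact hne this
  -- conclude
  rw [← M0, Finset.sum_filter]
  apply Finset.sum_congr rfl
  intro r _
  by_cases hr : 0 < p r
  · by_cases h1 : pA i0 r a = 1
    · simp [hr, h1]
    · have h0 : pA i0 r a = 0 := det r hr h1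
      simp [hr, h1, h0]
  · have : p r = 0 := le_antisymm (not_lt.mp hr) (hp0 r)
    simp [this, hr]
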